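/- If μ and ν are probability measures on a metric space X, each uniformly distributed over n points (i.e., μ = (1/n)Σ δ_{x_j}, ν = (1/n)Σ δ_{y_j}), then W_1(μ,ν) = min_{σ∈S_n} (1/n) Σ_{j=0}^{n-1} d(x_j, y_{σ(j)}). -/

import Mathlib

open Filter MeasureTheory Topology
open scoped ENNReal NNReal

/-- The Wasserstein distance `W₁(μ,ν)`: the infimum over all couplings `π` of `μ` and `ν`
of `∫ d(x,y) dπ(x,y)`. -/
noncomputable def W1 {X : Type*} [MetricSpace X] [MeasurableSpace X] (μ ν : Measure X) : ℝ :=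
  sInf ((fun π : Measure (X × X) => ∫ p, dist p.1 p.2 ∂π) ''
    {π | π.map Prod.fst = μ ∧ π.map Prod.snd = ν})

/-!
Each permutation `σ` yields the coupling `(1/n) Σ δ_(x_j, y_σ(j))`, whose cost is
`(1/n) Σ d(x_j, y_σ(j))`. Conversely, a coupling `π` of the two empirical measures lives on the
finitely many atoms `(x_i, y_j)`. Spreading the mass `π{(s,t)}` evenly over the index pairs
`(i, j)` with `x_i = s`, `y_j = t` gives a matrix which, multiplied by `n`, is bistochastic and
has the same cost as `π`. By Birkhoff–von Neumann it is a convex combination of permutation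
matrices, so the (linear) cost is at least that of some permutation.
-/

open Finset

theorem Finset.sum_div_card_fiber {ι α K : Type*} [Fintype ι] [DecidableEq α] [Semifield K]
    [CharZero K] (f : ι → α) (g : α → K) :
    ∑ i, g (f i) / #{j | f j = f i} = ∑ a ∈ univ.image f, g a := by
  rw [sum_comp (fun a => g a / #{j | f j = a}) f]
  refine sum_congr rfl fun a ha => ?_
  obtain ⟨i, -, rfl⟩ := mem_image.1 ha
  have hfib : (#{j | f j = f i} : K) ≠ 0 :=
    Nat.cast_ne_zero.2 (card_ne_zero_of_mem (mem_filter.2 ⟨mem_univ i, rfl⟩))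
  rw [nsmul_eq_mul, mul_div_cancel₀ _ hfib]

theorem Finset.sum_sum_div_card_fiber {ι κ α β K : Type*} [Fintype ι] [Fintype κ]
    [DecidableEq α] [DecidableEq β] [Semifield K] [CharZero K]
    (f : ι → α) (h : κ → β) (g : α → β → K) :
    ∑ i, ∑ j, g (f i) (h j) / (#{k | f k = f i} * #{k | h k = h j}) =
      ∑ a ∈ univ.image f, ∑ b ∈ univ.image h, g a b := by
  simp_rw [div_mul_eq_div_div_swap, ← sum_div, sum_div_card_fiber h]
  exact sum_div_card_fiber f fun a => ∑ b ∈ univ.image h, g a b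

theorem exists_perm_sum_le_of_mem_doublyStochastic {ι : Type*} [Fintype ι] [DecidableEq ι]
    {M : Matrix ι ι ℝ} (hM : M ∈ doublyStochastic ℝ ι) (c : ι → ι → ℝ) :
    ∃ σ : Equiv.Perm ι, ∑ i, c i (σ i) ≤ ∑ i, ∑ j, M i j * c i j := by
  let cost : Matrix ι ι ℝ →ₗ[ℝ] ℝ :=
    { toFun := fun M => ∑ i, ∑ j, M i j * c i j
      map_add' := fun _ _ => by simp only [Matrix.add_apply, add_mul, sum_add_distrib]
      map_smul' := fun _ _ => by
        simp only [Matrix.smul_apply, smul_eq_mul, mul_assoc, mul_sum, RingHom.id_apply] }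
  rw [← SetLike.mem_coe, doublyStochastic_eq_convexHull_permMatrix] at hM
  obtain ⟨_, ⟨σ, rfl⟩, hσ⟩ :=
    (cost.concaveOn convex_univ).exists_le_of_mem_convexHull (Set.subset_univ _) hM
  refine ⟨σ, le_of_eq_of_le ?_ hσ⟩
  simp [cost, PEquiv.toMatrix_apply, eq_comm]

namespace MeasureTheory

theorem integral_eq_sum_of_measure_compl_eq_zero {α E : Type*} [MeasurableSpace α]
    [MeasurableSingletonClass α] [NormedAddCommGroup E] [NormedSpace ℝ E] [CompleteSpace E]
    {μ : Measure α} [IsFiniteMeasure μ] {s : Finset α} (hs : μ (↑s)ᶜ = 0) (f : α → E) :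
    ∫ a, f a ∂μ = ∑ a ∈ s, μ.real {a} • f a := by
  rw [← setIntegral_finset s IntegrableOn.finset,
    Measure.restrict_eq_self_of_ae_mem (ae_iff.2 hs)]

section Marginals

variable {α β : Type*} [MeasurableSpace α] [MeasurableSpace β] [MeasurableSingletonClass α]
  [MeasurableSingletonClass β] {π : Measure (α × β)}

theorem measure_compl_product_eq_zero {S : Finset α} {T : Finset β}
    (hS : π.map Prod.fst (↑S)ᶜ = 0) (hT : π.map Prod.snd (↑T)ᶜ = 0) :
    π (↑(S ×ˢ T))ᶜ = 0 := by
  rw [Measure.map_apply measurable_fst S.measurableSet.compl] at hS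
  rw [Measure.map_apply measurable_snd T.measurableSet.compl] at hT
  rw [coe_product, Set.compl_prod_eq_union, Set.prod_univ, Set.univ_prod]
  exact measure_union_null hS hT

variable [IsFiniteMeasure π]

theorem sum_measureReal_singleton_prod_right {T : Finset β}
    (hT : π.map Prod.snd (↑T)ᶜ = 0) (a : α) :
    ∑ t ∈ T, π.real {(a, t)} = (π.map Prod.fst).real {a} := by
  rw [Measure.map_apply measurable_snd T.measurableSet.compl] at hT
  have hprod : ∑ t ∈ T, π.real {(a, t)} = π.real ({a} ×ˢ ↑T) := by
    rw [← coe_singleton, ← coe_product, ← sum_measureReal_singleton, singleton_product, sum_map]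
    rfl
  rw [hprod, Set.prod_eq, measureReal_def,
    measure_inter_conull (t := Prod.snd ⁻¹' (T : Set β)) hT,
    map_measureReal_apply measurable_fst (measurableSet_singleton a), measureReal_def]

theorem sum_measureReal_singleton_prod_left {S : Finset α}
    (hS : π.map Prod.fst (↑S)ᶜ = 0) (b : β) :
    ∑ s ∈ S, π.real {(s, b)} = (π.map Prod.snd).real {b} := by
  rw [Measure.map_apply measurable_fst S.measurableSet.compl] at hS
  have hprod : ∑ s ∈ S, π.real {(s, b)} = π.real (↑S ×ˢ {b}) := by
    rw [← coe_singleton, ← coe_product, ← sum_measureReal_singleton, product_singleton, sum_map]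
    rfl
  rw [hprod, Set.prod_eq, Set.inter_comm, measureReal_def,
    measure_inter_conull (t := Prod.fst ⁻¹' (S : Set α)) hS,
    map_measureReal_apply measurable_snd (measurableSet_singleton b), measureReal_def]

end Marginals

section Empirical

variable {α ι : Type*} [MeasurableSpace α] [Fintype ι]

noncomputable def empiricalMeasure (x : ι → α) : Measure α :=
  (Fintype.card ι : ℝ≥0∞)⁻¹ • ∑ i, Measure.dirac (x i)

instance (x : ι → α) : IsFiniteMeasure (empiricalMeasure x) :=
  ⟨by simpa [empiricalMeasure] using (ENNReal.inv_mul_le_one _).trans_lt ENNReal.one_lt_top⟩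

theorem empiricalMeasure_real_singleton [MeasurableSingletonClass α] [DecidableEq α]
    (x : ι → α) (a : α) :
    (empiricalMeasure x).real {a} = #{i | x i = a} / Fintype.card ι := by
  simp [empiricalMeasure, measureReal_def, Set.indicator_apply, eq_comm, div_eq_inv_mul]

theorem empiricalMeasure_compl_image [MeasurableSingletonClass α] [DecidableEq α]
    (x : ι → α) : empiricalMeasure x (↑(univ.image x))ᶜ = 0 := by
  simp [empiricalMeasure]

theorem map_empiricalMeasure {β : Type*} [MeasurableSpace β] {f : α → β} (hf : Measurable f)
    (x : ι → α) : (empiricalMeasure x).map f = empiricalMeasure (f ∘ x) := by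
  simp [empiricalMeasure, Measure.map_smul, Measure.map_finset_sum' hf.aemeasurable,
    Measure.map_dirac' hf]

theorem empiricalMeasure_comp_equiv (x : ι → α) (σ : ι ≃ ι) :
    empiricalMeasure (x ∘ σ) = empiricalMeasure x := by
  simp only [empiricalMeasure, Function.comp_apply,
    Equiv.sum_comp σ (fun i => Measure.dirac (x i))]

theorem integral_empiricalMeasure [MeasurableSingletonClass α] {E : Type*}
    [NormedAddCommGroup E] [NormedSpace ℝ E] [CompleteSpace E] (x : ι → α) (f : α → E) :
    ∫ a, f a ∂empiricalMeasure x = (Fintype.card ι : ℝ)⁻¹ • ∑ i, f (x i) := by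
  rw [empiricalMeasure, integral_smul_measure,
    integral_finsetSum_measure fun i _ => integrable_dirac (by simp)]
  simp [integral_dirac]

theorem isFiniteMeasure_of_map_eq_empiricalMeasure {β : Type*} [MeasurableSpace β]
    {μ : Measure β} {f : β → α} (hf : Measurable f) {x : ι → α}
    (h : μ.map f = empiricalMeasure x) : IsFiniteMeasure μ :=
  have : IsFiniteMeasure (μ.map f) := h ▸ inferInstance
  Measure.isFiniteMeasure_of_map hf.aemeasurable

end Empirical

section CouplingWeight

variable {α β ι : Type*} [MeasurableSpace α] [MeasurableSpace β] [MeasurableSingletonClass α]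
  [MeasurableSingletonClass β] [DecidableEq α] [DecidableEq β] [Fintype ι]

/-- The mass of the atom `(x i, y j)`, shared equally among all index pairs that name it. -/
noncomputable def couplingWeight (π : Measure (α × β)) (x : ι → α) (y : ι → β) (i j : ι) : ℝ :=
  π.real {(x i, y j)} / (#{k | x k = x i} * #{k | y k = y j})

variable {π : Measure (α × β)} {x : ι → α} {y : ι → β}

theorem sum_couplingWeight_right (hx : π.map Prod.fst = empiricalMeasure x)
    (hy : π.map Prod.snd = empiricalMeasure y) (i : ι) :
    ∑ j, couplingWeight π x y i j = (Fintype.card ι : ℝ)⁻¹ := by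
  have := isFiniteMeasure_of_map_eq_empiricalMeasure measurable_fst hx
  have hfib : (#{k | x k = x i} : ℝ) ≠ 0 :=
    Nat.cast_ne_zero.2 (card_ne_zero_of_mem (mem_filter.2 ⟨mem_univ i, rfl⟩))
  simp_rw [couplingWeight, div_mul_eq_div_div_swap, ← sum_div,
    sum_div_card_fiber y fun t => π.real {(x i, t)}]
  rw [sum_measureReal_singleton_prod_right (hy ▸ empiricalMeasure_compl_image y), hx,
    empiricalMeasure_real_singleton, div_div_cancel_left' hfib]

theorem sum_couplingWeight_left (hx : π.map Prod.fst = empiricalMeasure x)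
    (hy : π.map Prod.snd = empiricalMeasure y) (j : ι) :
    ∑ i, couplingWeight π x y i j = (Fintype.card ι : ℝ)⁻¹ := by
  have := isFiniteMeasure_of_map_eq_empiricalMeasure measurable_fst hx
  have hfib : (#{k | y k = y j} : ℝ) ≠ 0 :=
    Nat.cast_ne_zero.2 (card_ne_zero_of_mem (mem_filter.2 ⟨mem_univ j, rfl⟩))
  simp_rw [couplingWeight, div_mul_eq_div_div, ← sum_div,
    sum_div_card_fiber x fun s => π.real {(s, y j)}]
  rw [sum_measureReal_singleton_prod_left (hx ▸ empiricalMeasure_compl_image x), hy,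
    empiricalMeasure_real_singleton, div_div_cancel_left' hfib]

theorem card_smul_couplingWeight_mem_doublyStochastic [DecidableEq ι]
    (hx : π.map Prod.fst = empiricalMeasure x) (hy : π.map Prod.snd = empiricalMeasure y) :
    (Fintype.card ι : ℝ) • Matrix.of (couplingWeight π x y) ∈ doublyStochastic ℝ ι := by
  have hcard (i : ι) : (Fintype.card ι : ℝ) * (Fintype.card ι : ℝ)⁻¹ = 1 :=
    have : Nonempty ι := ⟨i⟩
    mul_inv_cancel₀ (Nat.cast_ne_zero.2 Fintype.card_ne_zero)
  refine mem_doublyStochastic_iff_sum.2 ⟨fun i j => ?_, fun i => ?_, fun j => ?_⟩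
  · simp only [Matrix.smul_apply, Matrix.of_apply, smul_eq_mul, couplingWeight]
    positivity
  · simp only [Matrix.smul_apply, Matrix.of_apply, smul_eq_mul, ← mul_sum,
      sum_couplingWeight_right hx hy, hcard i]
  · simp only [Matrix.smul_apply, Matrix.of_apply, smul_eq_mul, ← mul_sum,
      sum_couplingWeight_left hx hy, hcard j]

theorem sum_couplingWeight_mul (hx : π.map Prod.fst = empiricalMeasure x)
    (hy : π.map Prod.snd = empiricalMeasure y) (c : α → β → ℝ) :
    ∑ i, ∑ j, couplingWeight π x y i j * c (x i) (y j) = ∫ p, c p.1 p.2 ∂π := by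
  have := isFiniteMeasure_of_map_eq_empiricalMeasure measurable_fst hx
  simp_rw [couplingWeight, div_mul_eq_mul_div]
  rw [sum_sum_div_card_fiber x y fun s t => π.real {(s, t)} * c s t, ← sum_product',
    integral_eq_sum_of_measure_compl_eq_zero (measure_compl_product_eq_zero
      (hx ▸ empiricalMeasure_compl_image x) (hy ▸ empiricalMeasure_compl_image y))]
  rfl

end CouplingWeight

theorem iInf_perm_le_integral_of_map_eq_empiricalMeasure {α β ι : Type*} [MeasurableSpace α]
    [MeasurableSpace β] [MeasurableSingletonClass α] [MeasurableSingletonClass β] [Fintype ι]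
    [DecidableEq ι] {π : Measure (α × β)} {x : ι → α} {y : ι → β}
    (hx : π.map Prod.fst = empiricalMeasure x) (hy : π.map Prod.snd = empiricalMeasure y)
    (c : α → β → ℝ) :
    ⨅ σ : Equiv.Perm ι, (Fintype.card ι : ℝ)⁻¹ * ∑ i, c (x i) (y (σ i)) ≤
      ∫ p, c p.1 p.2 ∂π := by
  classical
  set N : ℝ := (Fintype.card ι : ℝ)
  obtain ⟨σ, hσ⟩ := exists_perm_sum_le_of_mem_doublyStochastic
    (card_smul_couplingWeight_mem_doublyStochastic hx hy) fun i j => c (x i) (y j)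
  calc ⨅ σ : Equiv.Perm ι, N⁻¹ * ∑ i, c (x i) (y (σ i))
      ≤ N⁻¹ * ∑ i, c (x i) (y (σ i)) := ciInf_le (Set.finite_range _).bddBelow σ
    _ ≤ N⁻¹ * ∑ i, ∑ j, (N • Matrix.of (couplingWeight π x y)) i j * c (x i) (y j) := by
        gcongr
    _ = ∑ i, ∑ j, couplingWeight π x y i j * c (x i) (y j) := by
        rcases isEmpty_or_nonempty ι with hι | hι
        · simp
        · have hN : N ≠ 0 := Nat.cast_ne_zero.2 Fintype.card_ne_zero
          simp only [Matrix.smul_apply, Matrix.of_apply, smul_eq_mul, mul_sum, ← mul_assoc,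
            inv_mul_cancel₀ hN, one_mul]
    _ = ∫ p, c p.1 p.2 ∂π := sum_couplingWeight_mul hx hy c

end MeasureTheory

theorem W1_empiricalMeasure {X ι : Type*} [MetricSpace X] [MeasurableSpace X]
    [MeasurableSingletonClass X] [Fintype ι] [DecidableEq ι] (x y : ι → X) :
    W1 (empiricalMeasure x) (empiricalMeasure y) =
      ⨅ σ : Equiv.Perm ι, (Fintype.card ι : ℝ)⁻¹ * ∑ i, dist (x i) (y (σ i)) := by
  unfold W1
  set costs := (fun π : Measure (X × X) => ∫ p, dist p.1 p.2 ∂π) ''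
    {π | π.map Prod.fst = empiricalMeasure x ∧ π.map Prod.snd = empiricalMeasure y}
  have hperm (σ : Equiv.Perm ι) :
      (Fintype.card ι : ℝ)⁻¹ * ∑ i, dist (x i) (y (σ i)) ∈ costs :=
    ⟨empiricalMeasure fun i => (x i, y (σ i)),
      ⟨map_empiricalMeasure measurable_fst _,
        (map_empiricalMeasure measurable_snd _).trans (empiricalMeasure_comp_equiv y σ)⟩,
      integral_empiricalMeasure _ _⟩
  have hlower : ∀ r ∈ costs,
      ⨅ σ : Equiv.Perm ι, (Fintype.card ι : ℝ)⁻¹ * ∑ i, dist (x i) (y (σ i)) ≤ r := by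
    rintro _ ⟨π, ⟨hx, hy⟩, rfl⟩
    exact iInf_perm_le_integral_of_map_eq_empiricalMeasure hx hy dist
  exact le_antisymm (le_ciInf fun σ => csInf_le ⟨_, hlower⟩ (hperm σ))
    (le_csInf ⟨_, hperm 1⟩ hlower)

theorem wasserstein_uniform_discrete {X : Type*} [MetricSpace X] [MeasurableSpace X]
    [BorelSpace X] (n : ℕ) (x y : Fin n → X) :
    W1 (((n : ℝ≥0∞))⁻¹ • ∑ j : Fin n, MeasureTheory.Measure.dirac (x j))
       (((n : ℝ≥0∞))⁻¹ • ∑ j : Fin n, MeasureTheory.Measure.dirac (y j)) =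
      ⨅ σ : Equiv.Perm (Fin n), (1 / (n : ℝ)) * ∑ j : Fin n, dist (x j) (y (σ j)) := by
  simpa only [empiricalMeasure, Fintype.card_fin, one_div] using W1_empiricalMeasure x y
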